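/- arXiv:2304.12722 — 4 statements merged into one kernel-verified Lean document; each statement's English description precedes it below -/
import Mathlib

section
/- Let τ be a nowhere-vanishing integrable 1-form on M, Z a vector field with ι_Z τ = 1, and set α = £_Z τ (so that ι_Z α = 0). Then the Godbillon-Vey representative satisfies α ∧ dα = −τ ∧ (£_Z τ) ∧ (£_Z² τ). -/
/-- An abstract calculus of smooth differential forms on a smooth manifold:
`A` is the algebra of (mixed-degree) differential forms with wedge product
written `*`, `VF` is the space of smooth vector fields.  The structure
provides the exterior derivative `d`, interior product `iota`, Lie
derivative `lie`, Lie bracket of vector fields `bracket`, a Riemannian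
metric `met` with musical isomorphisms `flat`/`sharp`, and time
derivatives `Dt`/`DtV` of time-dependent forms and vector fields,
together with their standard axioms. -/
class FormCalculus (A : Type*) (VF : outParam (Type*)) [Ring A] [Algebra ℝ A]
    [AddCommGroup VF] where
  /-- `IsForm n a` : `a` is a homogeneous differential form of degree `n`. -/
  IsForm : ℕ → A → Prop
  /-- `NowhereZero n a` : `a` is a nowhere-vanishing `n`-form. -/
  NowhereZero : ℕ → A → Prop
  /-- nowhere-vanishing vector field -/
  NowhereZeroV : VF → Prop
  /-- (pointwise) positive smooth function, i.e. positive degree-0 form -/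
  Positive : A → Prop
  /-- exterior derivative -/
  d : A → A
  /-- interior product with a vector field -/
  iota : VF → A → A
  /-- Lie derivative along a vector field -/
  lie : VF → A → A
  /-- Lie bracket of vector fields -/
  bracket : VF → VF → VF
  /-- musical isomorphism `♭` induced by the Riemannian metric -/
  flat : VF → A
  /-- musical isomorphism `♯` induced by the Riemannian metric -/
  sharp : A → VF
  /-- the Riemannian metric `g(X,Y)`, a smooth function -/
  met : VF → VF → A
  /-- time derivative `∂/∂t` of a time-dependent form -/
  Dt : (ℝ → A) → ℝ → A
  /-- time derivative `∂/∂t` of a time-dependent vector field -/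
  DtV : (ℝ → VF) → ℝ → VF
  isForm_one : IsForm 0 1
  isForm_zero : ∀ n, IsForm n 0
  isForm_add : ∀ n a b, IsForm n a → IsForm n b → IsForm n (a + b)
  isForm_neg : ∀ n a, IsForm n a → IsForm n (-a)
  isForm_smul : ∀ n (r : ℝ) a, IsForm n a → IsForm n (r • a)
  isForm_mul : ∀ m n a b, IsForm m a → IsForm n b → IsForm (m + n) (a * b)
  isForm_d : ∀ n a, IsForm n a → IsForm (n + 1) (d a)
  d_add : ∀ a b, d (a + b) = d a + d b
  d_smul : ∀ (r : ℝ) a, d (r • a) = r • d a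
  d_d : ∀ a, d (d a) = 0
  d_mul : ∀ m a b, IsForm m a →
    d (a * b) = d a * b + ((-1 : ℝ) ^ m) • (a * d b)
  mul_graded_comm : ∀ m n a b, IsForm m a → IsForm n b →
    a * b = ((-1 : ℝ) ^ (m * n)) • (b * a)
  isForm_iota : ∀ (Z : VF) n a, IsForm (n + 1) a → IsForm n (iota Z a)
  iota_form0 : ∀ (Z : VF) a, IsForm 0 a → iota Z a = 0
  iota_add : ∀ (Z : VF) a b, iota Z (a + b) = iota Z a + iota Z b
  iota_smul : ∀ (Z : VF) (r : ℝ) a, iota Z (r • a) = r • iota Z a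
  iota_addV : ∀ (Z W : VF) a, iota (Z + W) a = iota Z a + iota W a
  iota_negV : ∀ (Z : VF) a, iota (-Z) a = -(iota Z a)
  iota_mul : ∀ (Z : VF) m a b, IsForm m a →
    iota Z (a * b) = iota Z a * b + ((-1 : ℝ) ^ m) • (a * iota Z b)
  iota_iota : ∀ (Z : VF) a, iota Z (iota Z a) = 0
  /-- Cartan's magic formula `£_Z = ι_Z ∘ d + d ∘ ι_Z`. -/
  cartan : ∀ (Z : VF) a, lie Z a = iota Z (d a) + d (iota Z a)
  isForm_lie : ∀ (Z : VF) n a, IsForm n a → IsForm n (lie Z a)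
  lie_add : ∀ (Z : VF) a b, lie Z (a + b) = lie Z a + lie Z b
  lie_mul : ∀ (Z : VF) a b, lie Z (a * b) = lie Z a * b + a * lie Z b
  lie_d : ∀ (Z : VF) a, lie Z (d a) = d (lie Z a)
  isForm_flat : ∀ X : VF, IsForm 1 (flat X)
  flat_add : ∀ X Y : VF, flat (X + Y) = flat X + flat Y
  sharp_flat : ∀ X : VF, sharp (flat X) = X
  flat_sharp : ∀ a, IsForm 1 a → flat (sharp a) = a
  iota_flat : ∀ X Y : VF, iota X (flat Y) = met X Y
  met_symm : ∀ X Y : VF, met X Y = met Y X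
  isForm_met : ∀ X Y : VF, IsForm 0 (met X Y)
  Dt_add : ∀ (c c' : ℝ → A) t, Dt (fun s => c s + c' s) t = Dt c t + Dt c' t
  Dt_d : ∀ (c : ℝ → A) t, Dt (fun s => d (c s)) t = d (Dt c t)
  Dt_const : ∀ (a : A) (t : ℝ), Dt (fun _ => a) t = 0
  Dt_mul : ∀ (c c' : ℝ → A) t,
    Dt (fun s => c s * c' s) t = Dt c t * c' t + c t * Dt c' t
  Dt_flat : ∀ (w : ℝ → VF) t, Dt (fun s => flat (w s)) t = flat (DtV w t)

namespace FormCalculus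

variable {A : Type*} {VF : Type*} [Ring A] [Algebra ℝ A] [AddCommGroup VF]
  [FormCalculus A VF]

/-- If `τ` is a nowhere-vanishing integrable 1-form, `Z` a
vector field with `ι_Z τ = 1` and `α = £_Z τ`, then the Godbillon-Vey
representative satisfies `α ∧ dα = − τ ∧ (£_Z τ) ∧ (£_Z² τ)`. -/
theorem godbillonVey_rep_via_lie (τ : A) (Z : VF)
    (hτ : IsForm 1 τ) (hnz : NowhereZero (VF := VF) 1 τ)
    (hint : τ * d τ = 0) (hZ : iota Z τ = 1) :
    lie Z τ * d (lie Z τ) = -(τ * lie Z τ * lie Z (lie Z τ)) := by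
  set α := lie Z τ with hα
  have hα1 : IsForm 1 α := isForm_lie Z 1 τ hτ
  -- d 1 = 0
  have d_one : d (1 : A) = 0 := by
    have h := d_mul 0 (1 : A) (1 : A) isForm_one
    simp only [one_mul, mul_one, pow_zero, one_smul] at h
    nth_rewrite 1 [← add_zero (d (1 : A))] at h
    exact (add_left_cancel h).symm
  -- α * α = 0
  have sq_zero : α * α = 0 := by
    have h := mul_graded_comm 1 1 α α hα1 hα1
    have h2 : α * α + α * α = 0 := by
      nth_rewrite 1 [h]
      simp
    have h3 : (2 : ℝ) • (α * α) = 0 := by rw [two_smul]; exact h2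
    have := congrArg (fun x => ((2 : ℝ)⁻¹) • x) h3
    simpa [smul_smul] using this
  -- ι_Z dτ = α
  have hiota_dτ : iota Z (d τ) = α := by
    rw [hα, cartan, hZ, d_one, add_zero]
  -- dτ = τ * α
  have iota_zero : iota Z (0 : A) = 0 := by
    have h := iota_smul Z (0 : ℝ) (0 : A)
    simpa using h
  have hdτ : d τ = τ * α := by
    have h := iota_mul Z 1 τ (d τ) hτ
    rw [hint, hZ, one_mul, hiota_dτ, iota_zero, pow_one, neg_smul, one_smul] at h
    exact (sub_eq_zero.mp (by rw [sub_eq_add_neg]; exact h.symm))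
  -- d α = τ * lie Z α
  have hdα : d α = τ * lie Z α := by
    rw [hα, ← lie_d, hdτ, lie_mul, ← hα, sq_zero, zero_add]
  -- α * τ = -(τ * α)
  have hcomm : α * τ = -(τ * α) := by
    have h := mul_graded_comm 1 1 α τ hα1 hτ
    simpa using h
  calc α * d α = (α * τ) * lie Z α := by rw [hdα, mul_assoc]
    _ = -(τ * α * lie Z α) := by rw [hcomm, neg_mul]

end FormCalculus
end

section
/- Let (Z, h) be a Carrollian structure on M with compatible connection ∇ (∇Z = 0, ∇h = 0), and define Φ(T)(X,Y) = h(T(Z,X),Y) + h(T(Z,Y),X). Then Φ(T^∇) = £_Z h, i.e. for all vector fields X, Y: h(T^∇(Z,X),Y) + h(T^∇(Z,Y),X) = (£_Z h)(X,Y). -/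
/-! Since `∇Z = 0`, the torsion reduces to `T^∇(Z, X) = ∇_Z X - [Z, X]`, and compatibility
`∇h = 0` rewrites `Z (h(X, Y))` as `h(∇_Z X, Y) + h(X, ∇_Z Y)`; what remains are the bracket
terms of `(£_Z h)(X, Y) = Z (h(X, Y)) - h([Z, X], Y) - h(X, [Z, Y])`. -/

namespace FormCalculus

theorem sub_left_of_add_left {G α H : Type*} [AddGroup G] [AddGroup H] {h : G → α → H}
    (haddl : ∀ X X' Y, h (X + X') Y = h X Y + h X' Y) (X X' : G) (Y : α) :
    h (X - X') Y = h X Y - h X' Y :=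
  map_sub (AddMonoidHom.mk' (h · Y) (haddl · · Y)) X X'

variable {A : Type*} {VF : Type*} [Ring A] [Algebra ℝ A] [AddCommGroup VF]
  [FormCalculus A VF]

def torsion (nabla : VF → VF → VF) (X Y : VF) : VF :=
  nabla X Y - nabla Y X - bracket (A := A) X Y

def lieDerivBilin (Z : VF) (h : VF → VF → A) (X Y : VF) : A :=
  lie Z (h X Y) - h (bracket (A := A) Z X) Y - h X (bracket (A := A) Z Y)

theorem torsion_eq_of_nabla_eq_zero {nabla : VF → VF → VF} {Z : VF}
    (hnablaZ : ∀ X : VF, nabla X Z = 0) (X : VF) :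
    torsion (A := A) nabla Z X = nabla Z X - bracket (A := A) Z X := by
  rw [torsion, hnablaZ, sub_zero]

theorem lieDerivBilin_eq_of_compatible {Z : VF} {h : VF → VF → A} {nabla : VF → VF → VF}
    (hsymm : ∀ X Y : VF, h X Y = h Y X)
    (haddl : ∀ X X' Y : VF, h (X + X') Y = h X Y + h X' Y)
    (hnablah : ∀ X Y W : VF, lie X (h Y W) = h (nabla X Y) W + h Y (nabla X W)) (X Y : VF) :
    lieDerivBilin Z h X Y =
      h (nabla Z X - bracket (A := A) Z X) Y + h (nabla Z Y - bracket (A := A) Z Y) X := by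
  rw [lieDerivBilin, hnablah, sub_left_of_add_left haddl, sub_left_of_add_left haddl,
    hsymm X (bracket (A := A) Z Y), hsymm X (nabla Z Y)]
  abel

theorem carroll_Phi_torsion_eq_lie_h_general (Z : VF) (h : VF → VF → A)
    (hsymm : ∀ X Y : VF, h X Y = h Y X)
    (haddl : ∀ X X' Y : VF, h (X + X') Y = h X Y + h X' Y)
    (nabla : VF → VF → VF)
    (hnablaZ : ∀ X : VF, nabla X Z = 0)
    (hnablah : ∀ X Y W : VF,
      lie X (h Y W) = h (nabla X Y) W + h Y (nabla X W)) :
    ∀ X Y : VF,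
      h (nabla Z X - nabla X Z - bracket (A := A) Z X) Y +
        h (nabla Z Y - nabla Y Z - bracket (A := A) Z Y) X =
      lie Z (h X Y) - h (bracket (A := A) Z X) Y - h X (bracket (A := A) Z Y) := by
  intro X Y
  change h (torsion (A := A) nabla Z X) Y + h (torsion (A := A) nabla Z Y) X =
    lieDerivBilin Z h X Y
  rw [torsion_eq_of_nabla_eq_zero hnablaZ, torsion_eq_of_nabla_eq_zero hnablaZ,
    lieDerivBilin_eq_of_compatible hsymm haddl hnablah]

/-- Let `(Z, h)` be a Carrollian structure (`Z` a
nowhere-vanishing vector field, `h` a symmetric (0,2)-tensor with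
`ι_Z h = 0`) with compatible connection `∇` (`∇Z = 0`, `∇h = 0`).
Then `Φ(T^∇) = £_Z h`, i.e. for all vector fields `X, Y`:
`h(T^∇(Z,X),Y) + h(T^∇(Z,Y),X) = (£_Z h)(X,Y)`. -/
theorem carroll_Phi_torsion_eq_lie_h (Z : VF) (h : VF → VF → A)
    (hZnz : NowhereZeroV (A := A) Z)
    (hform : ∀ X Y : VF, IsForm 0 (h X Y))
    (hsymm : ∀ X Y : VF, h X Y = h Y X)
    (hker : ∀ X : VF, h Z X = 0)
    (haddl : ∀ X X' Y : VF, h (X + X') Y = h X Y + h X' Y)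
    (haddr : ∀ X Y Y' : VF, h X (Y + Y') = h X Y + h X Y')
    (hnegl : ∀ X Y : VF, h (-X) Y = -(h X Y))
    (nabla : VF → VF → VF)
    (hnablaZ : ∀ X : VF, nabla X Z = 0)
    (hnablah : ∀ X Y W : VF,
      lie X (h Y W) = h (nabla X Y) W + h Y (nabla X W)) :
    ∀ X Y : VF,
      h (nabla Z X - nabla X Z - bracket (A := A) Z X) Y +
        h (nabla Z Y - nabla Y Z - bracket (A := A) Z Y) X =
      lie Z (h X Y) - h (bracket (A := A) Z X) Y - h X (bracket (A := A) Z Y) :=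
  carroll_Phi_torsion_eq_lie_h_general Z h hsymm haddl nabla hnablaZ hnablah

end FormCalculus
end

section
/- Let v be a nowhere-vanishing vector field on a Riemannian manifold with v^♭ ∧ dv^♭ = 0 and dv^♭ = v^♭ ∧ α_v. Then ι_v α_v = −£_v log s_v = −(1/s_v) £_v s_v, where s_v = g(v,v). In particular, ι_v α_v = 0 if and only if £_v s_v = 0. -/
namespace FormCalculus

variable {A : Type*} {VF : Type*} [Ring A] [Algebra ℝ A] [AddCommGroup VF]
  [FormCalculus A VF]

/-- Let `v` be a nowhere-vanishing vector field with
`v^♭ ∧ dv^♭ = 0`, `s_v = g(v,v) > 0`, `u = 1/s_v`, clock form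
`τ = (1/s_v) v^♭`, and `α_v = £_v τ − d log s_v` (the gauge `α = £_v τ`),
so that `dv^♭ = v^♭ ∧ α_v`.  Then
`ι_v α_v = −£_v log s_v = −(1/s_v) £_v s_v`; in particular
`ι_v α_v = 0 ↔ £_v s_v = 0`. -/
theorem iota_alpha_v (v : VF) (u αv : A)
    (hvnz : NowhereZeroV (A := A) v)
    (hpos : Positive (VF := VF) (met (A := A) v v))
    (hu0 : IsForm 0 u) (hu : u * met (A := A) v v = 1)
    (hfrob : flat (A := A) v * d (flat (A := A) v) = 0)
    (hgauge : αv = lie v (u * flat (A := A) v) - u * d (met (A := A) v v))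
    (h : d (flat (A := A) v) = flat (A := A) v * αv) :
    iota v αv = -(u * lie v (met (A := A) v v)) ∧
      (iota v αv = 0 ↔ lie v (met (A := A) v v) = 0) := by
  set β := flat (A := A) v with hβdef
  set s := met (A := A) v v with hsdef
  have h0s : IsForm 0 s := isForm_met v v
  have d0 : d (0 : A) = 0 := by
    have := d_smul (A := A) (VF := VF) (0 : ℝ) (0 : A); simpa using this
  have i0 : ∀ Z : VF, iota Z (0 : A) = 0 := fun Z => by
    have := iota_smul Z (0 : ℝ) (0 : A); simpa using this
  have ineg : ∀ (Z : VF) (a : A), iota Z (-a) = -(iota Z a) := fun Z a => by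
    have := iota_smul Z (-1 : ℝ) a; simpa using this
  have d1 : d (1 : A) = 0 := by
    have h2 : d ((1 : A) * 1) = d 1 * 1 + ((-1 : ℝ) ^ 0) • ((1 : A) * d 1) :=
      d_mul 0 (1 : A) 1 isForm_one
    simp only [one_mul, mul_one, pow_zero, one_smul] at h2
    have h3 : d (1 : A) + 0 = d (1 : A) + d 1 := by simpa using h2
    exact (add_left_cancel h3).symm
  have lie1 : lie v (1 : A) = 0 := by
    rw [cartan, iota_form0 v 1 isForm_one, d1, i0, d0, add_zero]
  have key : lie v u * s + u * lie v s = 0 := by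
    have := lie_mul v u s
    rw [hu, lie1] at this
    exact this.symm
  have ivs : iota v s = 0 := iota_form0 v s h0s
  have ivβ : iota v β = s := iota_flat v v
  have ivds : iota v (d s) = lie v s := by
    rw [cartan v s, ivs, d0, add_zero]
  have ivlβ : iota v (lie v β) = lie v s := by
    rw [cartan v β, iota_add, iota_iota, zero_add, ivβ, ivds]
  have mul0 : ∀ a b : A, IsForm 0 a → iota v (a * b) = a * iota v b := by
    intro a b ha
    rw [iota_mul v 0 a b ha, iota_form0 v a ha, zero_mul, zero_add, pow_zero,
      one_smul]
  have hlieu0 : IsForm 0 (lie v u) := isForm_lie v 0 u hu0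
  have main : iota v αv = -(u * lie v s) := by
    rw [hgauge, sub_eq_add_neg, iota_add, ineg, lie_mul, iota_add,
      mul0 u (d s) hu0, ivds, mul0 u (lie v β) hu0, ivlβ,
      iota_mul v 0 (lie v u) β hlieu0, iota_form0 v (lie v u) hlieu0,
      zero_mul, zero_add, pow_zero, one_smul, ivβ]
    have h4 : lie v u * s = -(u * lie v s) := eq_neg_of_add_eq_zero_left key
    rw [h4]
    abel
  refine ⟨main, ?_, ?_⟩
  · intro h5
    rw [main] at h5
    have h6 : u * lie v s = 0 := neg_eq_zero.mp h5
    have h7 : s * (u * lie v s) = s * 0 := by rw [h6]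
    have hcomm : u * s = s * u := by
      have := mul_graded_comm 0 0 u s hu0 h0s; simpa using this
    rw [← mul_assoc, ← hcomm, hu, one_mul, mul_zero] at h7
    exact h7
  · intro h5
    rw [main, h5, mul_zero, neg_zero]

end FormCalculus
end

section
/- Let v be a nowhere-vanishing divergence-free vector field on an oriented Riemannian manifold (M^n, g, μ) with v^♭ ∧ dv^♭ = 0 and dv^♭ = v^♭ ∧ α_v. Suppose v is Eulerisable with Bernoulli function b, i.e. ι_v dv^♭ = db, and suppose £_v s_v = 0 where s_v = g(v,v). Then α_v = (1/s_v) db, and consequently the Godbillon-Vey representative α_v ∧ dα_v = (1/s_v) db ∧ d(1/s_v) ∧ db = 0 is identically zero, so the Godbillon-Vey class is trivial. -/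
namespace FormCalculus

variable {A : Type*} {VF : Type*} [Ring A] [Algebra ℝ A] [AddCommGroup VF]
  [FormCalculus A VF]

/-- Let `v` be a nowhere-vanishing divergence-free vector
field on an oriented Riemannian manifold with volume form `μ`, with
`v^♭ ∧ dv^♭ = 0` and `dv^♭ = v^♭ ∧ α_v` (with the gauge `ι_v α_v = 0`).
Suppose `v` is Eulerisable with Bernoulli function `b`, i.e.
`ι_v dv^♭ = db`, and `£_v s_v = 0` where `s_v = g(v,v) > 0`, `u = 1/s_v`.
Then `α_v = (1/s_v) db`, and the Godbillon-Vey representative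
`α_v ∧ dα_v` vanishes identically; hence the Godbillon-Vey class is
trivial. -/
theorem godbillonVey_trivial_of_eulerisable (v : VF) (μ b u αv : A) (n : ℕ)
    (hvnz : NowhereZeroV (A := A) v)
    (hμ : IsForm n μ) (hμnz : NowhereZero (VF := VF) n μ)
    (hdiv : lie v μ = 0)
    (hfrob : flat (A := A) v * d (flat (A := A) v) = 0)
    (hαv : IsForm 1 αv) (h : d (flat (A := A) v) = flat (A := A) v * αv)
    (hgauge : iota v αv = 0)
    (hb : IsForm 0 b) (hbern : iota v (d (flat (A := A) v)) = d b)
    (hs : lie v (met (A := A) v v) = 0)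
    (hpos : Positive (VF := VF) (met (A := A) v v))
    (hu0 : IsForm 0 u) (hu : u * met (A := A) v v = 1) :
    αv = u * d b ∧ αv * d αv = 0 := by
  have h1 : d b = met (A := A) v v * αv := by
    rw [← hbern, h, iota_mul v 1 (flat v) αv (isForm_flat v), iota_flat, hgauge, mul_zero,
      smul_zero, add_zero]
  have hαeq : αv = u * d b := by
    rw [h1, ← mul_assoc, hu, one_mul]
  have hdb1 : IsForm (VF := VF) 1 (d b) := by simpa using isForm_d 0 b hb
  have hdu1 : IsForm (VF := VF) 1 (d u) := by simpa using isForm_d 0 u hu0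
  have hxx : d (b : A) * d b = 0 := by
    have h2 := mul_graded_comm 1 1 (d (b : A)) (d b) hdb1 hdb1
    have h3 : d (b : A) * d b = -(d b * d b) := by simpa using h2
    have h4 : (2 : ℝ) • (d (b : A) * d b) = 0 := by
      rw [two_smul]
      nth_rewrite 1 [h3]
      abel
    calc d (b : A) * d b = ((1/2 : ℝ)) • ((2 : ℝ) • (d (b : A) * d b)) := by
          rw [smul_smul]; norm_num
      _ = 0 := by rw [h4, smul_zero]
  have hyx : d (u : A) * d b = -(d b * d u) := by
    have h2 := mul_graded_comm 1 1 (d (u : A)) (d b) hdu1 hdb1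
    simpa using h2
  have hdα : d αv = d u * d b := by
    rw [hαeq, d_mul 0 u (d b) hu0, d_d, mul_zero, smul_zero, add_zero]
  have key : d (b : A) * (d u * d b) = 0 := by
    rw [hyx, mul_neg, ← mul_assoc, hxx, zero_mul, neg_zero]
  refine ⟨hαeq, ?_⟩
  rw [hdα]
  nth_rewrite 1 [hαeq]
  rw [mul_assoc, key, mul_zero]

end FormCalculus
end
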